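/- If for all eigenvalues λ, μ of a square tensor A ∈ R^{J1×…×JN×J1×…×JN} one has λ + μ̄ ≠ 0 (equivalently, λ_i(A) + conj(λ_j(A)) ≠ 0 for all i,j), then the tensor Lyapunov equation A * X + X * A^T + B * B^T = 0 has a unique solution X ∈ R^{J1×…×JN×J1×…×JN}. -/

import Mathlib

/-!
The Lyapunov operator `X ↦ A X + X Aᵀ` is the Sylvester operator `X ↦ A X - X C` with
`C = -Aᵀ`. If `A X = X C`, then `p(A) X = X p(C)` for every polynomial `p`; for `p` the
characteristic polynomial of `A` this gives `X p(C) = 0`, and by the spectral mapping theorem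
`p(C)` is invertible as soon as `A` and `C` share no eigenvalue. So the Sylvester operator is
injective, hence bijective on the finite-dimensional space of matrices. The spectrum of a real
matrix is closed under conjugation, so the hypothesis `λ + μ̄ ≠ 0` says exactly that the spectra
of `A` and `-Aᵀ` are disjoint.
-/

open Matrix

/-- Multi-index type: an `N`-tuple of indices with mode sizes `d i`. -/
abbrev Idx {N : ℕ} (d : Fin N → ℕ) : Type := ∀ i, Fin (d i)

/-- The Einstein product, contracting over the middle multi-index `K`:
`(A *_M B)_{j,i} = ∑_k A_{j,k} B_{k,i}`. -/
def eprod {J K I : Type*} [Fintype K] (A : Matrix J K ℝ) (B : Matrix K I ℝ) :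
    Matrix J I ℝ :=
  Matrix.of fun j i => ∑ k, A j k * B k i

/-- The identity (diagonal) tensor. -/
def idT (J : Type*) [DecidableEq J] : Matrix J J ℝ :=
  Matrix.of fun j i => if j = i then 1 else 0
/-- The unfolding map Ψ (column-major). -/
def unfold {N M : ℕ} {dJ : Fin N → ℕ} {dK : Fin M → ℕ}
    (A : Matrix (Idx dJ) (Idx dK) ℝ) :
    Matrix (Fin (∏ i, dJ i)) (Fin (∏ i, dK i)) ℝ :=
  Matrix.of fun p q => A (finPiFinEquiv.symm p) (finPiFinEquiv.symm q)

open Polynomial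

theorem SemiconjBy.aeval {R A : Type*} [CommSemiring R] [Semiring A] [Algebra R A]
    {a x y : A} (h : SemiconjBy a x y) (p : R[X]) : SemiconjBy a (aeval x p) (aeval y p) := by
  simp only [SemiconjBy, aeval_eq_sum_range, Finset.mul_sum, Finset.sum_mul, mul_smul_comm,
    smul_mul_assoc, (h.pow_right _).eq]

namespace Matrix

variable {n : Type*} [Fintype n] [DecidableEq n]

theorem spectrum_transpose {K : Type*} [Field K] (M : Matrix n n K) :
    spectrum K Mᵀ = spectrum K M := by
  ext μ
  simp only [mem_spectrum_iff_isRoot_charpoly, charpoly_transpose]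

theorem eq_zero_of_mul_eq_mul_of_disjoint_spectrum {K : Type*} [Field K] [IsAlgClosed K]
    {A C X : Matrix n n K} (h : Disjoint (spectrum K A) (spectrum K C)) (hX : A * X = X * C) :
    X = 0 := by
  rcases isEmpty_or_nonempty n with hn | hn
  · exact Subsingleton.elim _ _
  have hunit : IsUnit (aeval C A.charpoly) := by
    rw [← spectrum.zero_notMem_iff K, spectrum.map_polynomial_aeval_of_degree_pos C _
      (by simpa [charpoly_degree_eq_dim] using Fintype.card_pos)]
    rintro ⟨μ, hμC, hμA⟩
    exact h.notMem_of_mem_right hμC (mem_spectrum_iff_isRoot_charpoly.2 hμA)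
  rw [← hunit.mul_left_eq_zero, (SemiconjBy.aeval hX.symm A.charpoly).eq, aeval_self_charpoly,
    zero_mul]

theorem bijective_mulLeft_sub_mulRight {K L : Type*} [Field K] [Field L] [IsAlgClosed L]
    [Algebra K L] {A C : Matrix n n K}
    (h : Disjoint (spectrum L (A.map (algebraMap K L))) (spectrum L (C.map (algebraMap K L)))) :
    Function.Bijective (LinearMap.mulLeft K A - LinearMap.mulRight K C) := by
  have hinj : Function.Injective (LinearMap.mulLeft K A - LinearMap.mulRight K C) := by
    rw [← LinearMap.ker_eq_bot, LinearMap.ker_eq_bot']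
    intro X hX
    have hAX : A * X = X * C := sub_eq_zero.1 hX
    have := eq_zero_of_mul_eq_mul_of_disjoint_spectrum h (X := X.map (algebraMap K L))
      (by rw [← Matrix.map_mul, ← Matrix.map_mul, hAX])
    exact map_injective (algebraMap K L).injective (by simpa using this)
  exact ⟨hinj, LinearMap.injective_iff_surjective.1 hinj⟩

theorem star_mem_spectrum_map_algebraMap {M : Matrix n n ℝ} {μ : ℂ}
    (hμ : μ ∈ spectrum ℂ (M.map (algebraMap ℝ ℂ))) :
    star μ ∈ spectrum ℂ (M.map (algebraMap ℝ ℂ)) := by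
  rw [mem_spectrum_iff_isRoot_charpoly, charpoly_map, IsRoot, eval_map_algebraMap] at hμ ⊢
  rw [Complex.star_def, aeval_conj, hμ, map_zero]

theorem disjoint_spectrum_map_neg_transpose {M : Matrix n n ℝ}
    (h : ∀ lam mu : ℂ, lam ∈ spectrum ℂ (M.map (algebraMap ℝ ℂ)) →
      mu ∈ spectrum ℂ (M.map (algebraMap ℝ ℂ)) → lam + star mu ≠ 0) :
    Disjoint (spectrum ℂ (M.map (algebraMap ℝ ℂ))) (spectrum ℂ ((-Mᵀ).map (algebraMap ℝ ℂ))) := by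
  rw [Set.disjoint_left]
  intro μ hμ hμ'
  rw [Matrix.map_neg _ (map_neg _), transpose_map, ← spectrum.neg_eq, Set.mem_neg,
    spectrum_transpose] at hμ'
  exact h μ (star (-μ)) hμ (star_mem_spectrum_map_algebraMap hμ') (by simp)

end Matrix

theorem eprod_eq_mul {J K I : Type*} [Fintype K] (A : Matrix J K ℝ) (B : Matrix K I ℝ) :
    eprod A B = A * B :=
  rfl

theorem spectrum_map_unfold {R : Type*} [CommRing R] {N : ℕ} {dJ : Fin N → ℕ}
    (A : Matrix (Idx dJ) (Idx dJ) ℝ) (f : ℝ → R) :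
    spectrum R ((unfold A).map f) = spectrum R (A.map f) :=
  AlgEquiv.spectrum_eq (reindexAlgEquiv R R finPiFinEquiv) (A.map f)

/-- if λ + μ̄ ≠ 0 for all eigenvalues λ, μ of the square tensor A
(eigenvalues taken as the complex spectrum of its unfolding), then the tensor
Lyapunov equation A * X + X * Aᵀ + B * Bᵀ = 0 has a unique solution. -/
theorem lyapunov_unique_solution {N M : ℕ} (dJ : Fin N → ℕ) (dK : Fin M → ℕ)
    (A : Matrix (Idx dJ) (Idx dJ) ℝ) (B : Matrix (Idx dJ) (Idx dK) ℝ)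
    (h : ∀ lam mu : ℂ,
        lam ∈ spectrum ℂ ((unfold A).map (algebraMap ℝ ℂ)) →
        mu ∈ spectrum ℂ ((unfold A).map (algebraMap ℝ ℂ)) →
        lam + star mu ≠ 0) :
    ∃! X : Matrix (Idx dJ) (Idx dJ) ℝ,
      eprod A X + eprod X Aᵀ + eprod B Bᵀ = 0 := by
  rw [spectrum_map_unfold] at h
  have hL := bijective_mulLeft_sub_mulRight (disjoint_spectrum_map_neg_transpose h)
  simp only [eprod_eq_mul, add_eq_zero_iff_eq_neg]
  convert hL.existsUnique (-(B * Bᵀ)) using 3 with X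
  simp [sub_eq_add_neg]
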